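/- For any discrete random variables X, Y, Z on finite spaces, J(X; Y) ≤ J(X; Z) + J(X; Y | Z) (triangle-like inequality for variational information). -/
import Mathlib


open scoped Classical BigOperators

/-- `μ` is a probability mass function on a finite type. -/
def IsPMF {Ω : Type*} [Fintype Ω] (μ : Ω → ℝ) : Prop :=
  (∀ ω, 0 ≤ μ ω) ∧ ∑ ω, μ ω = 1

/-- Probability that the random variable `X` takes the value `a` under `μ`. -/
noncomputable def pr {Ω α : Type*} [Fintype Ω] (μ : Ω → ℝ) (X : Ω → α) (a : α) : ℝ :=
  ∑ ω, if X ω = a then μ ω else 0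

/-- Variational information `J(X;Y)`: total variation distance between the joint
law of `(X,Y)` and the product of the marginal laws. -/
noncomputable def vinfo {Ω α β : Type*} [Fintype Ω] [Fintype α] [Fintype β]
    (μ : Ω → ℝ) (X : Ω → α) (Y : Ω → β) : ℝ :=
  (1/2) * ∑ a, ∑ b, |pr μ (fun ω => (X ω, Y ω)) (a, b) - pr μ X a * pr μ Y b|

/-- Conditional variational information `J(X;Y|W)`:
`E_W[d_TV(P(X,Y|W), P(X|W)⊗P(Y|W))]`. -/
noncomputable def condVinfo {Ω α β γ : Type*} [Fintype Ω] [Fintype α] [Fintype β] [Fintype γ]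
    (μ : Ω → ℝ) (X : Ω → α) (Y : Ω → β) (W : Ω → γ) : ℝ :=
  (1/2) * ∑ c, ∑ a, ∑ b,
    |pr μ (fun ω => (X ω, Y ω, W ω)) (a, b, c) -
      pr μ (fun ω => (X ω, W ω)) (a, c) * pr μ (fun ω => (Y ω, W ω)) (b, c) / pr μ W c|

section aux

variable {Ω α β γ : Type*} [Fintype Ω] [Fintype α] [Fintype β] [Fintype γ]

lemma pr_nonneg (μ : Ω → ℝ) (hμ : ∀ ω, 0 ≤ μ ω) (X : Ω → α) (a : α) : 0 ≤ pr μ X a := by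
  unfold pr
  refine Finset.sum_nonneg fun ω _ => ?_
  split_ifs
  exacts [hμ ω, le_rfl]

lemma pr_marg_snd (μ : Ω → ℝ) (X : Ω → α) (Y : Ω → β) (a : α) :
    ∑ b, pr μ (fun ω => (X ω, Y ω)) (a, b) = pr μ X a := by
  unfold pr
  rw [Finset.sum_comm]
  refine Finset.sum_congr rfl fun ω _ => ?_
  by_cases h : X ω = a <;> simp [Prod.ext_iff, h]

lemma pr_marg_fst (μ : Ω → ℝ) (X : Ω → α) (Y : Ω → β) (b : β) :
    ∑ a, pr μ (fun ω => (X ω, Y ω)) (a, b) = pr μ Y b := by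
  unfold pr
  rw [Finset.sum_comm]
  refine Finset.sum_congr rfl fun ω _ => ?_
  by_cases h : Y ω = b <;> simp [Prod.ext_iff, h]

lemma pr_marg_triple (μ : Ω → ℝ) (X : Ω → α) (Y : Ω → β) (Z : Ω → γ) (a : α) (b : β) :
    ∑ c, pr μ (fun ω => (X ω, Y ω, Z ω)) (a, b, c) = pr μ (fun ω => (X ω, Y ω)) (a, b) := by
  unfold pr
  rw [Finset.sum_comm]
  refine Finset.sum_congr rfl fun ω _ => ?_
  by_cases h : X ω = a ∧ Y ω = b
  · simp [Prod.ext_iff, h]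
  · simp only [Prod.ext_iff]
    rw [if_neg (by tauto)]
    exact Finset.sum_eq_zero fun c _ => if_neg (by tauto)

end aux

/-- Triangle-like inequality for variational information:
`J(X;Y) ≤ J(X;Z) + J(X;Y|Z)`. -/
theorem vinfo_triangle {Ω 𝒳 𝒴 𝒵 : Type*} [Fintype Ω] [Fintype 𝒳] [Fintype 𝒴] [Fintype 𝒵]
    (μ : Ω → ℝ) (hμ : IsPMF μ) (X : Ω → 𝒳) (Y : Ω → 𝒴) (Z : Ω → 𝒵) :
    vinfo μ X Y ≤ vinfo μ X Z + condVinfo μ X Y Z := by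
  obtain ⟨hpos, -⟩ := hμ
  set pX : 𝒳 → ℝ := pr μ X with hpX
  set pY : 𝒴 → ℝ := pr μ Y with hpY
  set pz : 𝒵 → ℝ := pr μ Z with hpz
  set pxy : 𝒳 → 𝒴 → ℝ := fun a b => pr μ (fun ω => (X ω, Y ω)) (a, b) with hpxy
  set pxz : 𝒳 → 𝒵 → ℝ := fun a c => pr μ (fun ω => (X ω, Z ω)) (a, c) with hpxz
  set pyz : 𝒴 → 𝒵 → ℝ := fun b c => pr μ (fun ω => (Y ω, Z ω)) (b, c) with hpyz
  set pxyz : 𝒳 → 𝒴 → 𝒵 → ℝ := fun a b c => pr μ (fun ω => (X ω, Y ω, Z ω)) (a, b, c) with hpxyz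
  have hpz_nonneg : ∀ c, 0 ≤ pz c := fun c => pr_nonneg μ hpos Z c
  have hpyz_nonneg : ∀ b c, 0 ≤ pyz b c := fun b c => pr_nonneg μ hpos _ _
  -- key pointwise bound
  have key : ∀ a b, |pxy a b - pX a * pY b| ≤
      (∑ c, |pxyz a b c - pxz a c * pyz b c / pz c|) +
      ∑ c, pyz b c * |pxz a c / pz c - pX a| := by
    intro a b
    have h1 : pxy a b - pX a * pY b =
        ∑ c, ((pxyz a b c - pxz a c * pyz b c / pz c) + pyz b c * (pxz a c / pz c - pX a)) := by
      have hm1 : ∑ c, pxyz a b c = pxy a b := pr_marg_triple μ X Y Z a b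
      have hm2 : ∑ c, pyz b c = pY b := pr_marg_snd μ Y Z b
      calc pxy a b - pX a * pY b = (∑ c, pxyz a b c) - pX a * ∑ c, pyz b c := by
            rw [hm1, hm2]
        _ = ∑ c, (pxyz a b c - pX a * pyz b c) := by
            rw [Finset.mul_sum, ← Finset.sum_sub_distrib]
        _ = _ := Finset.sum_congr rfl fun c _ => by ring
    rw [h1]
    calc |∑ c, ((pxyz a b c - pxz a c * pyz b c / pz c) + pyz b c * (pxz a c / pz c - pX a))| ≤
        ∑ c, |(pxyz a b c - pxz a c * pyz b c / pz c) + pyz b c * (pxz a c / pz c - pX a)| :=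
          Finset.abs_sum_le_sum_abs _ _
      _ ≤ ∑ c, (|pxyz a b c - pxz a c * pyz b c / pz c| + pyz b c * |pxz a c / pz c - pX a|) := by
          refine Finset.sum_le_sum fun c _ => ?_
          calc |_ + _| ≤ |pxyz a b c - pxz a c * pyz b c / pz c| +
              |pyz b c * (pxz a c / pz c - pX a)| := abs_add_le _ _
            _ = _ := by rw [abs_mul, abs_of_nonneg (hpyz_nonneg b c)]
      _ = _ := by rw [Finset.sum_add_distrib]
  -- bound the second part
  have hB : ∀ a, (∑ b, ∑ c, pyz b c * |pxz a c / pz c - pX a|) ≤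
      ∑ c, |pxz a c - pX a * pz c| := by
    intro a
    rw [Finset.sum_comm]
    refine Finset.sum_le_sum fun c _ => ?_
    rw [← Finset.sum_mul]
    have hm : ∑ b, pyz b c = pz c := pr_marg_fst μ Y Z c
    rw [hm]
    rcases eq_or_ne (pz c) 0 with h | h
    · rw [h, zero_mul]
      exact abs_nonneg _
    · have h1 : pz c * |pxz a c / pz c - pX a| = |pz c * (pxz a c / pz c - pX a)| := by
        rw [abs_mul, abs_of_nonneg (hpz_nonneg c)]
      have h2 : pz c * (pxz a c / pz c - pX a) = pxz a c - pX a * pz c := by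
        field_simp
      rw [h1, h2]
  -- assemble
  have main : (∑ a, ∑ b, |pxy a b - pX a * pY b|) ≤
      (∑ a, ∑ c, |pxz a c - pX a * pz c|) +
      ∑ c, ∑ a, ∑ b, |pxyz a b c - pxz a c * pyz b c / pz c| := by
    calc (∑ a, ∑ b, |pxy a b - pX a * pY b|)
        ≤ ∑ a, ∑ b, ((∑ c, |pxyz a b c - pxz a c * pyz b c / pz c|) +
            ∑ c, pyz b c * |pxz a c / pz c - pX a|) := by
          exact Finset.sum_le_sum fun a _ => Finset.sum_le_sum fun b _ => key a b
      _ = (∑ a, ∑ b, ∑ c, |pxyz a b c - pxz a c * pyz b c / pz c|) +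
            ∑ a, ∑ b, ∑ c, pyz b c * |pxz a c / pz c - pX a| := by
          rw [← Finset.sum_add_distrib]
          refine Finset.sum_congr rfl fun a _ => ?_
          rw [← Finset.sum_add_distrib]
      _ ≤ (∑ a, ∑ b, ∑ c, |pxyz a b c - pxz a c * pyz b c / pz c|) +
            ∑ a, ∑ c, |pxz a c - pX a * pz c| := by
          gcongr with a _
          exact hB a
      _ = _ := by
          rw [add_comm]
          congr 1
          rw [show (∑ a, ∑ b, ∑ c, |pxyz a b c - pxz a c * pyz b c / pz c|)
              = ∑ a, ∑ c, ∑ b, |pxyz a b c - pxz a c * pyz b c / pz c|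
            from Finset.sum_congr rfl fun a _ => Finset.sum_comm]
          exact Finset.sum_comm
  have hv1 : vinfo μ X Y = (1/2) * ∑ a, ∑ b, |pxy a b - pX a * pY b| := rfl
  have hv2 : vinfo μ X Z = (1/2) * ∑ a, ∑ c, |pxz a c - pX a * pz c| := rfl
  have hv3 : condVinfo μ X Y Z =
      (1/2) * ∑ c, ∑ a, ∑ b, |pxyz a b c - pxz a c * pyz b c / pz c| := rfl
  rw [hv1, hv2, hv3, ← mul_add]
  have h2 : (0:ℝ) < 1/2 := by norm_num
  exact mul_le_mul_of_nonneg_left main (le_of_lt h2)
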